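/- For each ω ∈ {−ω₀, ω₀} (in particular ω ≠ 0), there exists a unique 2π-periodic C¹ function f : ℝ → ℝ satisfying the first-order ODE with periodic boundary condition (1/4)·f'(θ) + κ(ω)·f(θ)/q(θ, ω) = 1/q(θ, ω) for all θ ∈ ℝ, where κ(ω) = (1 − exp(4πω))/(2·Z(ω, 2Kr)). -/

import Mathlib

noncomputable section

open MeasureTheory

/-- `G u ω x = x·cos u + 2ωu`. -/
def G (u ω x : ℝ) : ℝ := x * Real.cos u + 2 * ω * u

/-- The unnormalized stationary profile `S(θ, ω, x)`. -/
def S (θ ω x : ℝ) : ℝ :=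
  Real.exp (G θ ω x) *
    ((1 - Real.exp (4 * Real.pi * ω)) * (∫ u in (0:ℝ)..θ, Real.exp (-(G u ω x))) +
      Real.exp (4 * Real.pi * ω) * (∫ u in (0:ℝ)..(2 * Real.pi), Real.exp (-(G u ω x))))

/-- The normalization constant `Z(ω, x)`. -/
def Z (ω x : ℝ) : ℝ := ∫ θ in (0:ℝ)..(2 * Real.pi), S θ ω x

/-- `Ψ_μ` for the binary disorder law `μ = (1/2)(δ_{-ω₀} + δ_{ω₀})`. -/
def psiMu (ω₀ x : ℝ) : ℝ :=
  (1 / 2) * ((∫ θ in (0:ℝ)..(2 * Real.pi), Real.cos θ * S θ (-ω₀) x) / Z (-ω₀) x +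
    (∫ θ in (0:ℝ)..(2 * Real.pi), Real.cos θ * S θ ω₀ x) / Z ω₀ x)

/-- The stationary density `q(θ, ω) = S(θ, ω, 2Kr)/Z(ω, 2Kr)`. -/
def q (K r θ ω : ℝ) : ℝ := S θ ω (2 * K * r) / Z ω (2 * K * r)

/-- `κ(ω) = (1 − exp(4πω))/(2 Z(ω, 2Kr))`. -/
def kap (K r ω : ℝ) : ℝ := (1 - Real.exp (4 * Real.pi * ω)) / (2 * Z ω (2 * K * r))

/-- The averaged convolution `⟨J∗h⟩_μ(θ)` for binary disorder. -/
def Jconv (K ω₀ : ℝ) (h : ℝ → ℝ → ℝ) (θ : ℝ) : ℝ :=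
  -(K / 2) * ((∫ φ in (0:ℝ)..(2 * Real.pi), Real.sin φ * h (θ - φ) (-ω₀)) +
    (∫ φ in (0:ℝ)..(2 * Real.pi), Real.sin φ * h (θ - φ) ω₀))

/-- The linearized evolution operator `L` around the stationary density `q`. -/
def Lop (K ω₀ r : ℝ) (h : ℝ → ℝ → ℝ) (θ ω : ℝ) : ℝ :=
  (1 / 2) * deriv (deriv (fun u => h u ω)) θ -
    deriv (fun u => h u ω * (Jconv K ω₀ (q K r) u + ω) + q K r u ω * Jconv K ω₀ h u) θ

/-!
Since `q > 0` and `κ(ω) ≠ 0` (because `ω ≠ 0`), the ODE reads `f' = 4κ(1/κ − f)/q`, so the constant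
`1/κ` solves it. For any solution `f`, the integrating factor `exp(4κ ∫₀^θ 1/q)` makes
`(f − 1/κ)·exp(4κ ∫₀^θ 1/q)` constant; comparing `θ = 0` with `θ = 2π`, where the factor is not `1`,
forces `f(0) = 1/κ` and hence `f ≡ 1/κ`.
-/

open Real

section IntegratingFactor

variable {g w : ℝ → ℝ} {a c : ℝ}

theorem hasDerivAt_sub_mul_exp_integral (hg : Differentiable ℝ g) (hw : Continuous w)
    (hdg : ∀ t, deriv g t = a * w t * (c - g t)) (t : ℝ) :
    HasDerivAt (fun s => (g s - c) * exp (a * ∫ u in (0:ℝ)..s, w u)) 0 t := by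
  have hΦ : HasDerivAt (fun s => ∫ u in (0:ℝ)..s, w u) (w t) t :=
    intervalIntegral.integral_hasDerivAt_right (hw.intervalIntegrable _ _)
      hw.stronglyMeasurable.stronglyMeasurableAtFilter hw.continuousAt
  refine (((hg t).hasDerivAt.sub_const c).mul (hΦ.const_mul a).exp).congr_deriv ?_
  rw [hdg t]
  ring

theorem Function.Periodic.eq_const_of_deriv_eq_mul_sub {T : ℝ} (hgT : Function.Periodic g T)
    (hT : 0 < T) (hg : Differentiable ℝ g) (hw : Continuous w) (hw_pos : ∀ t, 0 < w t)
    (ha : a ≠ 0) (hdg : ∀ t, deriv g t = a * w t * (c - g t)) : g = fun _ => c := by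
  set F : ℝ → ℝ := fun s => (g s - c) * exp (a * ∫ u in (0:ℝ)..s, w u)
  have hF : ∀ t, F t = g 0 - c := fun t => by
    simpa [F] using is_const_of_deriv_eq_zero
      (fun s => (hasDerivAt_sub_mul_exp_integral hg hw hdg s).differentiableAt)
      (fun s => (hasDerivAt_sub_mul_exp_integral hg hw hdg s).deriv) t 0
  have hI : 0 < ∫ u in (0:ℝ)..T, w u :=
    intervalIntegral.intervalIntegral_pos_of_pos (hw.intervalIntegrable _ _) hw_pos hT
  have hfactor : exp (a * ∫ u in (0:ℝ)..T, w u) ≠ 1 := by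
    rw [Ne, exp_eq_one_iff]
    exact mul_ne_zero ha hI.ne'
  have hg0 : g 0 = c := by
    have hFT := hF T
    simp only [F, hgT.eq] at hFT
    by_contra hne
    exact hfactor (mul_eq_left₀ (sub_ne_zero.2 hne) |>.1 hFT)
  funext t
  simpa [F, hg0, sub_eq_zero] using hF t

end IntegratingFactor

section StationaryDensity

variable (ω x : ℝ)

lemma G_add_two_pi (u : ℝ) : G (u + 2 * π) ω x = G u ω x + 4 * π * ω := by
  simp only [G, cos_add_two_pi]
  ring

lemma continuous_exp_neg_G : Continuous fun u => exp (-(G u ω x)) := by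
  unfold G
  fun_prop

lemma intervalIntegrable_exp_neg_G (a b : ℝ) :
    IntervalIntegrable (fun u => exp (-(G u ω x))) volume a b :=
  (continuous_exp_neg_G ω x).intervalIntegrable a b

lemma continuous_integral_exp_neg_G : Continuous fun t => ∫ u in (0:ℝ)..t, exp (-(G u ω x)) :=
  intervalIntegral.continuous_primitive (intervalIntegrable_exp_neg_G ω x) 0

lemma continuous_S : Continuous fun θ => S θ ω x := by
  have := continuous_integral_exp_neg_G ω x
  unfold S G
  fun_prop

lemma S_periodic : Function.Periodic (fun θ => S θ ω x) (2 * π) := by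
  intro θ
  have hi := intervalIntegrable_exp_neg_G ω x
  -- `exp(−G)` picks up the factor `exp(−4πω)` over each period
  have hsplit : (∫ u in (0:ℝ)..(θ + 2 * π), exp (-(G u ω x)))
      = (∫ u in (0:ℝ)..(2 * π), exp (-(G u ω x)))
        + (∫ u in (0:ℝ)..θ, exp (-(G u ω x))) * exp (-(4 * π * ω)) := by
    rw [← intervalIntegral.integral_add_adjacent_intervals (hi 0 (2 * π)) (hi (2 * π) _)]
    congr 1
    rw [mul_comm (∫ u in (0:ℝ)..θ, _)]
    simpa [G_add_two_pi, neg_add, exp_add] using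
      (intervalIntegral.integral_comp_add_right (fun u => exp (-(G u ω x))) (2 * π)
        (a := 0) (b := θ)).symm
  simp only [S]
  rw [G_add_two_pi, hsplit, exp_add, exp_neg]
  field_simp
  ring

lemma S_pos (θ : ℝ) : 0 < S θ ω x := by
  obtain ⟨y, hy, hθy⟩ := (S_periodic ω x).exists_mem_Ico₀ (by positivity) θ
  rw [hθy]
  have hi := intervalIntegrable_exp_neg_G ω x
  set A := ∫ u in (0:ℝ)..y, exp (-(G u ω x))
  set B := ∫ u in y..(2 * π), exp (-(G u ω x))
  have hA : 0 ≤ A := intervalIntegral.integral_nonneg hy.1 fun _ _ => (exp_pos _).le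
  have hB : 0 < B :=
    intervalIntegral.intervalIntegral_pos_of_pos (hi _ _) (fun _ => exp_pos _) hy.2
  have hAB : (∫ u in (0:ℝ)..(2 * π), exp (-(G u ω x))) = A + B :=
    (intervalIntegral.integral_add_adjacent_intervals (hi 0 y) (hi y (2 * π))).symm
  show 0 < exp (G y ω x) * ((1 - exp (4 * π * ω)) * A + exp (4 * π * ω) * _)
  rw [hAB, show ∀ E, (1 - E) * A + E * (A + B) = A + E * B by intro E; ring]
  positivity

lemma Z_pos : 0 < Z ω x :=
  intervalIntegral.intervalIntegral_pos_of_pos ((continuous_S ω x).intervalIntegrable _ _)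
    (S_pos ω x) (by positivity)

end StationaryDensity

lemma q_pos (K r θ ω : ℝ) : 0 < q K r θ ω :=
  div_pos (S_pos _ _ _) (Z_pos _ _)

lemma continuous_q (K r ω : ℝ) : Continuous fun θ => q K r θ ω :=
  (continuous_S _ _).div_const _

lemma kap_ne_zero (K r : ℝ) {ω : ℝ} (hω : ω ≠ 0) : kap K r ω ≠ 0 := by
  refine div_ne_zero ?_ (mul_pos two_pos (Z_pos _ _)).ne'
  rw [sub_ne_zero, ne_comm, Ne, exp_eq_one_iff]
  exact mul_ne_zero (by positivity) hω

theorem stmt7_general (K ω₀ r : ℝ) (hω₀ : 0 < ω₀) :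
    ∀ ω ∈ ({-ω₀, ω₀} : Set ℝ),
      ∃! f : ℝ → ℝ,
        Function.Periodic f (2 * Real.pi) ∧ ContDiff ℝ 1 f ∧
          ∀ θ : ℝ,
            (1 / 4) * deriv f θ + kap K r ω * f θ / q K r θ ω = 1 / q K r θ ω := by
  intro ω hω
  have hω_ne : ω ≠ 0 := by
    rcases hω with rfl | rfl <;> simp [hω₀.ne']
  have hκ := kap_ne_zero K r hω_ne
  refine ⟨fun _ => 1 / kap K r ω, ⟨fun _ => rfl, contDiff_const, fun θ => ?_⟩, ?_⟩
  · simp [hκ]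
  rintro g ⟨hgT, hg, hode⟩
  refine hgT.eq_const_of_deriv_eq_mul_sub (by positivity) (hg.differentiable one_ne_zero)
    ((continuous_q K r ω).inv₀ fun θ => (q_pos K r θ ω).ne') (fun θ => inv_pos.2 (q_pos K r θ ω))
    (mul_ne_zero four_ne_zero hκ) fun θ => ?_
  show deriv g θ = 4 * kap K r ω * (q K r θ ω)⁻¹ * (1 / kap K r ω - g θ)
  have hq := (q_pos K r θ ω).ne'
  have := hode θ
  field_simp at this ⊢
  linear_combination this

/-- For each `ω ∈ {−ω₀, ω₀}`, the first-order periodic ODE has a unique `2π`-periodic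
`C¹` solution. -/
theorem stmt7 (K ω₀ r : ℝ) (hK : 0 < K) (hω₀ : 0 < ω₀) (hr : 0 < r)
    (hfix : r = psiMu ω₀ (2 * K * r)) :
    ∀ ω ∈ ({-ω₀, ω₀} : Set ℝ),
      ∃! f : ℝ → ℝ,
        Function.Periodic f (2 * Real.pi) ∧ ContDiff ℝ 1 f ∧
          ∀ θ : ℝ,
            (1 / 4) * deriv f θ + kap K r ω * f θ / q K r θ ω = 1 / q K r θ ω :=
  stmt7_general K ω₀ r hω₀
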